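/- The Shapley GCM does not satisfy Transaction Bundling: there exist a makespan function v satisfying (S1)–(S4), a finite set T, and transactions tx1, tx2 not in T with concatenation tx3 such that gas^S_{T∪{tx1,tx2}}(tx1) + gas^S_{T∪{tx1,tx2}}(tx2) > gas^S_{T∪{tx3}}(tx3). In particular, for T = {tx4} with tx1 ≃ (1,{k2}), tx2 ≃ (1,{k2}), tx3 ≃ (2,{k2}), tx4 ≃ (1,{k1}) and v the optimal-scheduler makespan on at least 2 threads, the left-hand side is 10/6 while the right-hand side is 3/2. -/

import Mathlib

/-- The Shapley GCM. -/
noncomputable def shapleyGas {Tx : Type} [DecidableEq Tx]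
    (v : Finset Tx → ℝ) (T : Finset Tx) (tx : Tx) : ℝ :=
  ∑ S ∈ (T.erase tx).powerset,
    ((S.card.factorial * (T.card - S.card - 1).factorial : ℝ) / (T.card.factorial : ℝ))
      * (v (insert tx S) - v S)

/-- Execution times of `tx1 ≃ (1,{k2})`, `tx2 ≃ (1,{k2})`, `tx3 ≃ (2,{k2})`,
`tx4 ≃ (1,{k1})` (indices `0,1,2,3`); `tx3` is the concatenation of `tx1` and
`tx2`. -/
noncomputable def tTx8 : Fin 4 → ℝ := ![1, 1, 2, 1]

/-- Storage key sets (keys `k1 = 0`, `k2 = 1`). -/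
def keysTx8 : Fin 4 → Finset (Fin 2) := ![{1}, {1}, {1}, {0}]

/-!
Take for `v` the largest total execution time spent on a single storage key. In the example
`tx1` and `tx2` conflict with each other but not with `tx4`, so each is charged its full time
except when it joins `{tx4}`, where it runs in parallel for free: `1/3 + 1/6 + 1/3 = 5/6` each.
The bundle `tx3` is charged `2` when it comes first and only `1` after `tx4`: `3/2` in total.
-/

open Finset

section Makespan

variable {Tx K : Type*} [DecidableEq K] (t : Tx → ℝ) (keys : Tx → Finset K)

def keyLoad (k : K) (S : Finset Tx) : ℝ := ∑ i ∈ S with k ∈ keys i, t i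

/-- With one key per transaction and at least as many threads as keys, this is the optimal
makespan: transactions sharing a key must run one after the other, the others in parallel. -/
noncomputable def keyMakespan (S : Finset Tx) : ℝ := ⨆ k, keyLoad t keys k S

variable {t keys}

@[simp]
lemma keyLoad_empty (k : K) : keyLoad t keys k ∅ = 0 := by
  simp [keyLoad]

lemma keyLoad_insert [DecidableEq Tx] {k : K} {a : Tx} {S : Finset Tx} (ha : a ∉ S) :
    keyLoad t keys k (insert a S) = (if k ∈ keys a then t a else 0) + keyLoad t keys k S := by
  rw [keyLoad, keyLoad, sum_filter, sum_filter, sum_insert ha]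

lemma keyLoad_mono (ht : ∀ i, 0 ≤ t i) (k : K) : Monotone (keyLoad t keys k) := fun _ _ h =>
  sum_le_sum_of_subset_of_nonneg (filter_subset_filter _ h) fun i _ _ => ht i

lemma keyMakespan_le_of_keyLoad_le [Finite K] {A B : Finset Tx}
    (h : ∀ k, keyLoad t keys k A ≤ keyLoad t keys k B) : keyMakespan t keys A ≤ keyMakespan t keys B :=
  ciSup_mono (Set.finite_range _).bddAbove h

lemma keyMakespan_mono [Finite K] (ht : ∀ i, 0 ≤ t i) : Monotone (keyMakespan t keys) :=
  fun _ _ h => keyMakespan_le_of_keyLoad_le fun k => keyLoad_mono ht k h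

@[simp]
lemma keyMakespan_empty : keyMakespan t keys ∅ = 0 := by
  simp [keyMakespan, Real.iSup_const_zero]

lemma keyMakespan_insert_insert_le_insert_concat [DecidableEq Tx] [Finite K] (ht : ∀ i, 0 ≤ t i)
    {T : Finset Tx} {a b c : Tx} (ha : a ∉ T) (hb : b ∉ T) (hc : c ∉ T) (hab : a ≠ b)
    (htc : t c = t a + t b) (hkc : keys c = keys a ∪ keys b) :
    keyMakespan t keys (insert a (insert b T)) ≤ keyMakespan t keys (insert c T) := by
  refine keyMakespan_le_of_keyLoad_le fun k => ?_
  rw [keyLoad_insert (by simp [hab, ha]), keyLoad_insert hb, keyLoad_insert hc, htc, hkc,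
    ← add_assoc]
  gcongr
  by_cases hka : k ∈ keys a <;> by_cases hkb : k ∈ keys b <;> simp [hka, hkb, ht a, ht b]

lemma keyMakespan_insert_le_insert [DecidableEq Tx] [Finite K] (ht : ∀ i, 0 ≤ t i)
    {T : Finset Tx} {a b : Tx} (ha : a ∉ T) (hb : b ∉ T)
    (htab : t a ≤ t b) (hkab : keys a ⊆ keys b) :
    keyMakespan t keys (insert a T) ≤ keyMakespan t keys (insert b T) := by
  refine keyMakespan_le_of_keyLoad_le fun k => ?_
  rw [keyLoad_insert ha, keyLoad_insert hb]
  gcongr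
  split_ifs with hka hkb hkb
  exacts [htab, absurd (hkab hka) hkb, ht b, le_rfl]

lemma keyMakespan_fin_two {keys : Tx → Finset (Fin 2)} (S : Finset Tx) :
    keyMakespan t keys S = max (keyLoad t keys 0 S) (keyLoad t keys 1 S) :=
  eq_of_forall_ge_iff fun c => by
    simp [keyMakespan, ciSup_le_iff (Set.finite_range _).bddAbove, Fin.forall_fin_two]

end Makespan

section Shapley

lemma Finset.sum_powerset_singleton {α β : Type*} [DecidableEq α] [AddCommMonoid β]
    (f : Finset α → β) (a : α) : ∑ s ∈ ({a} : Finset α).powerset, f s = f ∅ + f {a} := by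
  simpa using sum_powerset_insert (notMem_empty a) f

variable {Tx : Type} [DecidableEq Tx] (v : Finset Tx → ℝ)

lemma shapleyGas_pair {a b : Tx} (hab : a ≠ b) :
    shapleyGas v {a, b} a = (v {a} - v ∅) / 2 + (v {a, b} - v {b}) / 2 := by
  rw [shapleyGas, erase_insert (by simpa using hab), card_pair hab, sum_powerset_singleton]
  simp only [card_empty, card_singleton, insert_empty_eq, Nat.factorial]
  ring

lemma shapleyGas_triple {a b c : Tx} (hab : a ≠ b) (hac : a ≠ c) (hbc : b ≠ c) :
    shapleyGas v {a, b, c} a = (v {a} - v ∅) / 3 + (v {a, b} - v {b}) / 6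
      + (v {a, c} - v {c}) / 6 + (v {a, b, c} - v {b, c}) / 3 := by
  have hbc' : b ∉ ({c} : Finset Tx) := by simpa using hbc
  rw [shapleyGas, erase_insert (by simp [hab, hac]), card_insert_of_notMem (by simp [hab, hac]),
    card_pair hbc, sum_powerset_insert hbc', sum_powerset_singleton, sum_powerset_singleton]
  simp only [card_empty, card_singleton, card_pair hbc, insert_empty_eq, Nat.factorial]
  ring

end Shapley

lemma tTx8_nonneg (i : Fin 4) : 0 ≤ tTx8 i := by
  fin_cases i <;> norm_num [tTx8]

/-- The Shapley GCM does not satisfy Transaction Bundling: there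
is a makespan function `v` satisfying (S1)–(S4) (the optimal-scheduler makespan
on at least 2 threads), a set `T = {tx4}`, and transactions `tx1, tx2 ∉ T` with
concatenation `tx3` such that
`gas^S_{T∪{tx1,tx2}}(tx1) + gas^S_{T∪{tx1,tx2}}(tx2) = 10/6 > 3/2 = gas^S_{T∪{tx3}}(tx3)`. -/
theorem shapleyGas_not_transaction_bundling :
    ∃ v : Finset (Fin 4) → ℝ,
      -- (S1) monotonicity in T
      (∀ A B : Finset (Fin 4), A ⊆ B → v A ≤ v B) ∧
      -- (S2) monotonicity under bundling
      (∀ (T : Finset (Fin 4)) (a b c : Fin 4), a ∉ T → b ∉ T → c ∉ T → a ≠ b →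
        tTx8 c = tTx8 a + tTx8 b → keysTx8 c = keysTx8 a ∪ keysTx8 b →
        v (insert a (insert b T)) ≤ v (insert c T)) ∧
      -- (S3) monotonicity in t and K
      (∀ (T : Finset (Fin 4)) (a b : Fin 4), a ∉ T → b ∉ T →
        tTx8 a ≤ tTx8 b → keysTx8 a ⊆ keysTx8 b →
        v (insert a T) ≤ v (insert b T)) ∧
      -- (S4) empty set
      v ∅ = 0 ∧
      -- tx3 (= 2) is the concatenation of tx1 (= 0) and tx2 (= 1)
      tTx8 2 = tTx8 0 + tTx8 1 ∧ keysTx8 2 = keysTx8 0 ∪ keysTx8 1 ∧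
      -- the gas values
      shapleyGas v (insert 0 (insert 1 ({3} : Finset (Fin 4)))) 0
        + shapleyGas v (insert 0 (insert 1 ({3} : Finset (Fin 4)))) 1 = 10 / 6 ∧
      shapleyGas v (insert 2 ({3} : Finset (Fin 4))) 2 = 3 / 2 ∧
      shapleyGas v (insert 0 (insert 1 ({3} : Finset (Fin 4)))) 0
          + shapleyGas v (insert 0 (insert 1 ({3} : Finset (Fin 4)))) 1
        > shapleyGas v (insert 2 ({3} : Finset (Fin 4))) 2 := by
  have hbundled : shapleyGas (keyMakespan tTx8 keysTx8) {0, 1, 3} 0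
      + shapleyGas (keyMakespan tTx8 keysTx8) {0, 1, 3} 1 = 10 / 6 := by
    rw [shapleyGas_triple _ (by decide) (by decide) (by decide), insert_comm 0 1,
      shapleyGas_triple _ (by decide) (by decide) (by decide)]
    simp [keyMakespan_fin_two, keyLoad, sum_filter, tTx8, keysTx8]
    norm_num
  have hconcat : shapleyGas (keyMakespan tTx8 keysTx8) {2, 3} 2 = 3 / 2 := by
    rw [shapleyGas_pair _ (by decide)]
    simp [keyMakespan_fin_two, keyLoad, sum_filter, tTx8, keysTx8]
    norm_num
  refine ⟨keyMakespan tTx8 keysTx8, fun _ _ h => keyMakespan_mono tTx8_nonneg h,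
    fun T a b c ha hb hc hab => keyMakespan_insert_insert_le_insert_concat tTx8_nonneg ha hb hc hab,
    fun T a b ha hb => keyMakespan_insert_le_insert tTx8_nonneg ha hb, keyMakespan_empty,
    by simp [tTx8, one_add_one_eq_two], by decide, hbundled, hconcat, by norm_num [hbundled, hconcat]⟩
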